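/- In the exterior complex (E, d) on generators h_{i,j} (i ∈ {1,2,3}, j ∈ Z/3) with d(h_{1,j}) = 0, d(h_{2,j}) = h_{1,j}h_{1,j+1}, d(h_{3,j}) = h_{1,j}h_{2,j+1} + h_{2,j}h_{1,j+2}, the product of cocycles k_0·k_1 = h_{2,0}h_{1,1}h_{2,1}h_{1,2} is a coboundary: there exists ω ∈ E of degree 3 with d(ω) = h_{2,0}h_{1,1}h_{2,1}h_{1,2}. Hence the product of the classes [k_0][k_1] vanishes in H*(E, d). -/

import Mathlib

/-- The exterior algebra over `ZMod p` on nine degree-one generators `h i j`,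
`i ∈ {1,2,3}`, `j ∈ ZMod 3`. -/
abbrev E (p : ℕ) : Type := ExteriorAlgebra (ZMod p) ((Fin 3 × ZMod 3) → ZMod p)

open Fin.NatCast in
/-- The generator `h_{i,j}` (for `i ∈ {1,2,3}`). -/
noncomputable def h (p : ℕ) (i : ℕ) (j : ZMod 3) : E p :=
  ExteriorAlgebra.ι (ZMod p) (Pi.single (((i - 1 : ℕ) : Fin 3), j) 1)

/-!
The primitive is `ω = h_{1,1} h_{2,1} h_{3,0}`. Expanding `d ω` by the Leibniz rule gives three
terms: one contains `h_{1,1}` twice and one contains `h_{2,1}` twice, so both vanish, and the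
remaining term `h_{1,1} h_{2,1} h_{2,0} h_{1,2}` becomes `k_0 k_1` after two transpositions,
whose signs cancel.
-/

section Generators

variable (p : ℕ)

lemma h_mem_range (i : ℕ) (j : ZMod 3) :
    h p i j ∈ LinearMap.range (ExteriorAlgebra.ι (ZMod p) :
      ((Fin 3 × ZMod 3) → ZMod p) →ₗ[ZMod p] E p) :=
  ⟨_, rfl⟩

lemma h_mul_self (i : ℕ) (j : ZMod 3) : h p i j * h p i j = 0 :=
  ExteriorAlgebra.ι_sq_zero _

lemma h_mul_h_comm (i i' : ℕ) (j j' : ZMod 3) :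
    h p i j * h p i' j' = -(h p i' j' * h p i j) :=
  eq_neg_of_add_eq_zero_left (ExteriorAlgebra.ι_add_mul_swap _ _)

lemma h_mul_mul_h_self (i i' : ℕ) (j j' : ZMod 3) :
    h p i j * (h p i' j' * h p i j) = 0 := by
  rw [h_mul_h_comm p i' i, mul_neg, ← mul_assoc, h_mul_self, zero_mul, neg_zero]

lemma h_mul_h_mul_h_mem_pow_three (i₁ i₂ i₃ : ℕ) (j₁ j₂ j₃ : ZMod 3) :
    h p i₁ j₁ * (h p i₂ j₂ * h p i₃ j₃) ∈ LinearMap.range (ExteriorAlgebra.ι (ZMod p) :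
      ((Fin 3 × ZMod 3) → ZMod p) →ₗ[ZMod p] E p) ^ 3 := by
  rw [pow_three]
  exact Submodule.mul_mem_mul (h_mem_range p _ _)
    (Submodule.mul_mem_mul (h_mem_range p _ _) (h_mem_range p _ _))

end Generators

theorem k0k1_coboundary_general (p : ℕ)
    (d : E p →ₗ[ZMod p] E p)
    (hd1 : ∀ j : ZMod 3, d (h p 1 j) = 0)
    (hd2 : ∀ j : ZMod 3, d (h p 2 j) = h p 1 j * h p 1 (j + 1))
    (hd3 : ∀ j : ZMod 3, d (h p 3 j) = h p 1 j * h p 2 (j + 1) + h p 2 j * h p 1 (j + 2))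
    (hleib : ∀ i ∈ ({1, 2, 3} : Set ℕ), ∀ (j : ZMod 3) (y : E p),
      d (h p i j * y) = d (h p i j) * y - h p i j * d y)
    :
    ∃ ω ∈ (LinearMap.range (ExteriorAlgebra.ι (ZMod p) :
        ((Fin 3 × ZMod 3) → ZMod p) →ₗ[ZMod p] E p)) ^ 3,
      d ω = h p 2 0 * h p 1 1 * (h p 2 1 * h p 1 2) := by
  refine ⟨h p 1 1 * (h p 2 1 * h p 3 0), h_mul_h_mul_h_mem_pow_three p _ _ _ _ _ _, ?_⟩
  have leibniz_expansion : d (h p 1 1 * (h p 2 1 * h p 3 0)) =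
      -(h p 1 1 * h p 1 1 * (h p 1 2 * h p 3 0)) + h p 1 1 * (h p 2 1 * (h p 1 0 * h p 2 1))
        + h p 1 1 * (h p 2 1 * (h p 2 0 * h p 1 2)) := by
    rw [hleib 1 (by simp), hd1, hleib 2 (by simp), hd2, hd3]
    norm_num
    noncomm_ring
  rw [leibniz_expansion, h_mul_self, h_mul_mul_h_self, ← mul_assoc (h p 2 1),
    h_mul_h_comm p 2 2 1 0, h_mul_h_comm p 2 1 0 1]
  noncomm_ring

theorem k0k1_coboundary (p : ℕ) (hp : p.Prime) (hodd : Odd p)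
    (d : E p →ₗ[ZMod p] E p)
    (hd0 : d 1 = 0)
    (hd1 : ∀ j : ZMod 3, d (h p 1 j) = 0)
    (hd2 : ∀ j : ZMod 3, d (h p 2 j) = h p 1 j * h p 1 (j + 1))
    (hd3 : ∀ j : ZMod 3, d (h p 3 j) = h p 1 j * h p 2 (j + 1) + h p 2 j * h p 1 (j + 2))
    (hleib : ∀ i ∈ ({1, 2, 3} : Set ℕ), ∀ (j : ZMod 3) (y : E p),
      d (h p i j * y) = d (h p i j) * y - h p i j * d y)
    :
    ∃ ω ∈ (LinearMap.range (ExteriorAlgebra.ι (ZMod p) :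
        ((Fin 3 × ZMod 3) → ZMod p) →ₗ[ZMod p] E p)) ^ 3,
      d ω = h p 2 0 * h p 1 1 * (h p 2 1 * h p 1 2) :=
  k0k1_coboundary_general p d hd1 hd2 hd3 hleib
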